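/- Let p(n) > 0 for all n ≥ a and suppose Σ_{s=a}^{∞} 1/p(s) = ∞. Then the solution u₂ of Δ(p(n-1)Δu(n-1)) = r(n)u(n) (r ≥ 0) given by u₂(n) = Σ_{k=0}^{n-n₀-1} Y^{(2k+1)}(n) satisfies u₂(n) ≥ Y^{(1)}(n) = Σ_{s=n₀}^{n-1} 1/p(s) for n > n₀, and hence u₂ is unbounded. -/

import Mathlib

/-- The indefinite sum of `f` vanishing at `n₀` (real-valued). -/
noncomputable def istarR (n₀ : ℤ) (f : ℤ → ℝ) (n : ℤ) : ℝ :=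
  if n₀ ≤ n then ∑ j ∈ Finset.Ico n₀ n, f j else -∑ j ∈ Finset.Ico n n₀, f j

/-- The sequences `Y⁽ⁱ⁾` built from `u₀ ≡ 1`: `Y⁽⁰⁾ = 1`, even steps sum
`Y⁽ⁱ⁻¹⁾(s+1) r(s+1)`, odd steps sum `Y⁽ⁱ⁻¹⁾(s)/p(s)`. -/
noncomputable def YseqR (p r : ℤ → ℝ) (n₀ : ℤ) : ℕ → ℤ → ℝ
  | 0 => fun _ => 1
  | i + 1 =>
      if (i + 1) % 2 = 0 then
        istarR n₀ (fun s => YseqR p r n₀ i (s + 1) * r (s + 1))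
      else
        istarR n₀ (fun s => YseqR p r n₀ i s / p s)

/-!
`u₂(n)` is a sum of the iterated sums `Y⁽²ᵏ⁺¹⁾(n)`, which are nonnegative for `n ≥ n₀` because
every summand is built from `1/p ≥ 0` and `r ≥ 0`. Dropping all terms but `k = 0` leaves
`Y⁽¹⁾(n) = Σ_{s=n₀}^{n-1} 1/p(s)`, the partial sums of a divergent series of nonnegative terms.
-/

open Finset Filter

theorem istarR_of_le {n₀ n : ℤ} (f : ℤ → ℝ) (h : n₀ ≤ n) :
    istarR n₀ f n = ∑ j ∈ Ico n₀ n, f j :=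
  if_pos h

theorem istarR_nonneg {n₀ n : ℤ} {f : ℤ → ℝ} (hf : ∀ j, n₀ ≤ j → j < n → 0 ≤ f j)
    (h : n₀ ≤ n) : 0 ≤ istarR n₀ f n := by
  rw [istarR_of_le f h]
  exact sum_nonneg fun j hj => hf j (mem_Ico.1 hj).1 (mem_Ico.1 hj).2

theorem YseqR_nonneg {p r : ℤ → ℝ} {n₀ : ℤ} (hp : ∀ n, n₀ ≤ n → 0 ≤ p n)
    (hr : ∀ n, n₀ ≤ n → 0 ≤ r n) (i : ℕ) {n : ℤ} (hn : n₀ ≤ n) : 0 ≤ YseqR p r n₀ i n := by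
  induction i generalizing n with
  | zero => simp [YseqR]
  | succ i ih =>
    rw [YseqR]
    split
    · exact istarR_nonneg (fun s hs _ => mul_nonneg (ih (by omega)) (hr _ (by omega))) hn
    · exact istarR_nonneg (fun s hs _ => div_nonneg (ih hs) (hp s hs)) hn

theorem YseqR_one (p r : ℤ → ℝ) {n₀ n : ℤ} (hn : n₀ ≤ n) :
    YseqR p r n₀ 1 n = ∑ s ∈ Ico n₀ n, 1 / p s := by
  simp [YseqR, istarR_of_le _ hn]

theorem YseqR_one_le_sum_odd {p r : ℤ → ℝ} {n₀ n : ℤ} (hp : ∀ n, n₀ ≤ n → 0 ≤ p n)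
    (hr : ∀ n, n₀ ≤ n → 0 ≤ r n) (hn : n₀ < n) :
    YseqR p r n₀ 1 n ≤ ∑ k ∈ range (n - n₀).toNat, YseqR p r n₀ (2 * k + 1) n :=
  single_le_sum (f := fun k => YseqR p r n₀ (2 * k + 1) n)
    (fun k _ => YseqR_nonneg hp hr _ hn.le) (mem_range.2 (show 0 < (n - n₀).toNat by omega))

theorem Int.sum_Ico_add_eq_sum_range {M : Type*} [AddCommMonoid M] (f : ℤ → M) (m : ℤ) (N : ℕ) :
    ∑ s ∈ Ico m (m + N), f s = ∑ j ∈ Finset.range N, f (m + j) := by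
  simp [Int.Ico_eq_finset_map, sum_map]

theorem tendsto_sum_Ico_atTop_of_not_summable {f : ℤ → ℝ} {a n₀ : ℤ}
    (hf : ∀ n, a ≤ n → 0 ≤ f n) (hdiv : ¬ Summable fun j : ℕ => f (a + j)) (ha : a ≤ n₀) :
    Tendsto (fun N : ℕ => ∑ s ∈ Ico n₀ (n₀ + N), f s) atTop atTop := by
  have hshift : (fun j : ℕ => f (n₀ + j)) = fun j => f (a + ↑(j + (n₀ - a).toNat)) := by
    funext j; congr 1; omega
  have hdiv' : ¬ Summable fun j : ℕ => f (n₀ + j) := by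
    rwa [hshift, summable_nat_add_iff (f := fun j : ℕ => f (a + j))]
  simp_rw [Int.sum_Ico_add_eq_sum_range]
  exact (not_summable_iff_tendsto_nat_atTop_of_nonneg fun j => hf _ (by omega)).1 hdiv'

/-- If `p > 0`, `r ≥ 0` and `Σ 1/p(s) = ∞`, then the solution
`u₂(n) = Σ_{k=0}^{n-n₀-1} Y⁽²ᵏ⁺¹⁾(n)` dominates `Y⁽¹⁾(n) = Σ_{s=n₀}^{n-1} 1/p(s)` for
`n > n₀`, and hence is unbounded. -/
theorem u2_unbounded (p r : ℤ → ℝ) (a n₀ : ℤ) (u₂ : ℤ → ℝ)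
    (hp : ∀ n : ℤ, a ≤ n → 0 < p n) (hr : ∀ n : ℤ, a ≤ n → 0 ≤ r n)
    (hdiv : ¬ Summable (fun j : ℕ => 1 / p (a + (j : ℤ))))
    (hn₀ : a ≤ n₀)
    (hu₂ : ∀ n : ℤ, u₂ n = ∑ k ∈ Finset.range (n - n₀).toNat, YseqR p r n₀ (2 * k + 1) n) :
    (∀ n : ℤ, n₀ < n → ∑ s ∈ Finset.Ico n₀ n, 1 / p s ≤ u₂ n) ∧
    (∀ C : ℝ, ∃ n : ℤ, n₀ < n ∧ C < u₂ n) := by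
  have hp₀ : ∀ n, n₀ ≤ n → 0 ≤ p n := fun n hn => (hp n (hn₀.trans hn)).le
  have hr₀ : ∀ n, n₀ ≤ n → 0 ≤ r n := fun n hn => hr n (hn₀.trans hn)
  have hdom : ∀ n, n₀ < n → ∑ s ∈ Ico n₀ n, 1 / p s ≤ u₂ n := fun n hn => by
    rw [hu₂, ← YseqR_one p r hn.le]
    exact YseqR_one_le_sum_odd hp₀ hr₀ hn
  refine ⟨hdom, fun C => ?_⟩
  have htend := tendsto_sum_Ico_atTop_of_not_summable
    (fun n hn => one_div_nonneg.2 (hp n hn).le) hdiv hn₀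
  obtain ⟨N, hC, hN⟩ := ((htend.eventually_gt_atTop C).and (eventually_gt_atTop 0)).exists
  exact ⟨n₀ + N, by omega, hC.trans_le (hdom _ (by omega))⟩
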